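/- Let n ∈ {1, 2}. There exists a constant C (depending only on n) such that for every x ∈ ℝⁿ and every M ≥ 0: Γ₊(x, ∅, C⁻¹·M) ⊂ 𝒞₊(x, M) ⊂ Γ₊(x, ∅, C·M). Here Γ₊(x, ∅, M) denotes the set of 1-jets at x of nonnegative C² functions F : ℝⁿ → ℝ with ‖F‖_{C²(ℝⁿ)} ≤ M. -/

import Mathlib

noncomputable section

/-- `ℝⁿ` with the Euclidean metric. -/
abbrev Euc (n : ℕ) : Type := EuclideanSpace ℝ (Fin n)

/-- Partial derivative of `F : ℝⁿ → ℝ` in the `i`-th coordinate direction. -/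
noncomputable def pd {n : ℕ} (i : Fin n) (F : Euc n → ℝ) : Euc n → ℝ :=
  fun x => fderiv ℝ F x (EuclideanSpace.single i 1)

/-- `Σ_{|α| ≤ 2} |∂^α F(x)|²`: the multi-indices of order `≤ 2` are `0`, the `e_i`, and
the `e_i + e_j` for `i ≤ j`. -/
noncomputable def c2SqAt {n : ℕ} (F : Euc n → ℝ) (x : Euc n) : ℝ :=
  (F x) ^ 2 + (∑ i : Fin n, (pd i F x) ^ 2) +
    ∑ p ∈ Finset.univ.filter (fun p : Fin n × Fin n => p.1 ≤ p.2),
      (pd p.1 (pd p.2 F) x) ^ 2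

/-- `‖F‖_{C²(ℝⁿ)} := sup_x (Σ_{|α|≤2} |∂^α F(x)|²)^{1/2} ≤ M`. -/
def C2NormLE {n : ℕ} (F : Euc n → ℝ) (M : ℝ) : Prop :=
  ∀ x : Euc n, Real.sqrt (c2SqAt F x) ≤ M

/-- The 1-jet of `F` at `x`: `𝒥_x F (y) = F(x) + ∇F(x) · (y − x)`. -/
noncomputable def jet {n : ℕ} (x : Euc n) (F : Euc n → ℝ) : Euc n → ℝ :=
  fun y => F x + fderiv ℝ F x (y - x)

/-- `P` is an affine (degree `≤ 1`) polynomial on `ℝⁿ`. -/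
def IsAffine {n : ℕ} (P : Euc n → ℝ) : Prop :=
  ∃ (L : Euc n →L[ℝ] ℝ) (c : ℝ), P = fun y => L y + c

/-- `Γ₊(x, ∅, M)`: the 1-jets at `x` of nonnegative `C²` functions of norm at most `M`. -/
def GammaPlusEmpty {n : ℕ} (x : Euc n) (M : ℝ) : Set (Euc n → ℝ) :=
  {P | ∃ F : Euc n → ℝ, ContDiff ℝ 2 F ∧ (∀ y : Euc n, 0 ≤ F y) ∧
        C2NormLE F M ∧ jet x F = P}

/-- `𝒞₊(x, M)`: affine polynomials `P` with
`(Σ_{|α|≤1} |∂^α P(x)|²)^{1/2} ≤ M`, `P(x) ≥ 0`, and `|∇P| ≤ √(4M·P(x))`. -/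
def CPlus {n : ℕ} (x : Euc n) (M : ℝ) : Set (Euc n → ℝ) :=
  {P | IsAffine P ∧
    Real.sqrt ((P x) ^ 2 + ∑ i : Fin n, (pd i P x) ^ 2) ≤ M ∧
    0 ≤ P x ∧
    ‖fderiv ℝ P x‖ ≤ Real.sqrt (4 * M * P x)}

/-!
A nonnegative `C²` function `F` whose second derivative has norm at most `K` satisfies
`‖DF(x)‖² ≤ 4 K F(x)`: on every line through `x` the quadratic Taylor upper bound of `F` is
nonnegative, so its discriminant is nonpositive. Conversely, a jet `p + L (· - x)` with
`‖L‖² ≤ 4 M p` is the jet of the sine bump `p (1 + sin (L (· - x) / p))`, which is nonnegative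
and has second derivative of norm at most `‖L‖² / p ≤ 4 M`. On `ℝⁿ` the coordinate `C²` norm
controls, and is controlled by, the operator norms of the derivatives up to a factor `n`; for
`n ≤ 2` the constant `C = 8` then works in both directions.
-/

section Coordinates

variable {n : ℕ}

theorem sum_sq_apply_single_eq_norm_sq (L : Euc n →L[ℝ] ℝ) :
    ∑ i, L (EuclideanSpace.single i 1) ^ 2 = ‖L‖ ^ 2 := by
  set w := (InnerProductSpace.toDual ℝ (Euc n)).symm L
  have hw : ∀ i, L (EuclideanSpace.single i 1) = w i := fun i => by
    rw [← InnerProductSpace.toDual_symm_apply, EuclideanSpace.inner_single_right]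
    simp [w]
  simp only [hw, ← EuclideanSpace.real_norm_sq_eq, w, LinearIsometryEquiv.norm_map]

theorem opNorm_le_sqrt_card_mul {V : Type*} [NormedAddCommGroup V] [NormedSpace ℝ V]
    (L : Euc n →L[ℝ] V) {c : ℝ} (hc : 0 ≤ c)
    (h : ∀ i, ‖L (EuclideanSpace.single i 1)‖ ≤ c) : ‖L‖ ≤ √n * c := by
  refine L.opNorm_le_bound (by positivity) fun v => ?_
  have hv : v = ∑ i, v i • EuclideanSpace.single i 1 := by
    simpa using ((EuclideanSpace.basisFun (Fin n) ℝ).sum_repr v).symm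
  have hl1 : ∑ i, |v i| ≤ √n * ‖v‖ := by
    rw [← Real.sqrt_sq (norm_nonneg v), ← Real.sqrt_mul (Nat.cast_nonneg n),
      EuclideanSpace.real_norm_sq_eq]
    refine Real.le_sqrt_of_sq_le ?_
    simpa using sq_sum_le_card_mul_sum_sq (s := Finset.univ) (f := fun i => |v i|)
  calc ‖L v‖ = ‖∑ i, v i • L (EuclideanSpace.single i 1)‖ := by
        conv_lhs => rw [hv]
        simp only [map_sum, map_smul]
    _ ≤ ∑ i, |v i| * c := by
        refine (norm_sum_le _ _).trans (Finset.sum_le_sum fun i _ => ?_)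
        rw [norm_smul, Real.norm_eq_abs]
        exact mul_le_mul_of_nonneg_left (h i) (abs_nonneg _)
    _ ≤ √n * c * ‖v‖ := by
        rw [← Finset.sum_mul]
        nlinarith

theorem sum_sq_pd_eq_norm_sq_fderiv (F : Euc n → ℝ) (x : Euc n) :
    ∑ i, pd i F x ^ 2 = ‖fderiv ℝ F x‖ ^ 2 :=
  sum_sq_apply_single_eq_norm_sq _

theorem sq_add_norm_sq_fderiv_le_c2SqAt (F : Euc n → ℝ) (y : Euc n) :
    F y ^ 2 + ‖fderiv ℝ F y‖ ^ 2 ≤ c2SqAt F y := by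
  rw [c2SqAt, sum_sq_pd_eq_norm_sq_fderiv]
  exact le_add_of_nonneg_right (Finset.sum_nonneg fun _ _ => sq_nonneg _)

variable {F : Euc n → ℝ}

theorem pd_pd_eq_fderiv_fderiv (hF : ContDiff ℝ 2 F) (i j : Fin n) (y : Euc n) :
    pd i (pd j F) y =
      fderiv ℝ (fderiv ℝ F) y (EuclideanSpace.single i 1) (EuclideanSpace.single j 1) := by
  have hDF : DifferentiableAt ℝ (fderiv ℝ F) y :=
    (hF.fderiv_right le_rfl).differentiable one_ne_zero y
  change fderiv ℝ (fun z => fderiv ℝ F z (EuclideanSpace.single j 1)) y _ = _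
  simp [fderiv_clm_apply hDF (differentiableAt_const _)]

theorem pd_pd_comm (hF : ContDiff ℝ 2 F) (i j : Fin n) (y : Euc n) :
    pd i (pd j F) y = pd j (pd i F) y := by
  rw [pd_pd_eq_fderiv_fderiv hF, pd_pd_eq_fderiv_fderiv hF,
    (hF.contDiffAt.isSymmSndFDerivAt (by simp)).eq]

theorem sq_pd_pd_le_c2SqAt (hF : ContDiff ℝ 2 F) (i j : Fin n) (y : Euc n) :
    pd i (pd j F) y ^ 2 ≤ c2SqAt F y := by
  wlog hij : i ≤ j generalizing i j
  · rw [pd_pd_comm hF]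
    exact this j i (le_of_not_ge hij)
  have hmem : (i, j) ∈ Finset.univ.filter (fun p : Fin n × Fin n => p.1 ≤ p.2) := by simp [hij]
  have := Finset.single_le_sum (f := fun p : Fin n × Fin n => pd p.1 (pd p.2 F) y ^ 2)
    (fun _ _ => sq_nonneg _) hmem
  rw [c2SqAt]
  nlinarith [sq_nonneg (F y), Finset.sum_nonneg fun k (_ : k ∈ Finset.univ) =>
    sq_nonneg (pd k F y)]

theorem norm_fderiv_fderiv_le_of_c2NormLE {M : ℝ} (hF : ContDiff ℝ 2 F) (hM : C2NormLE F M)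
    (y : Euc n) : ‖fderiv ℝ (fderiv ℝ F) y‖ ≤ n * M := by
  have hM0 : 0 ≤ M := (Real.sqrt_nonneg _).trans (hM y)
  have hentry : ∀ i j, ‖fderiv ℝ (fderiv ℝ F) y (EuclideanSpace.single i 1)
      (EuclideanSpace.single j 1)‖ ≤ M := fun i j => by
    rw [← pd_pd_eq_fderiv_fderiv hF, Real.norm_eq_abs, ← Real.sqrt_sq_eq_abs]
    exact (Real.sqrt_le_sqrt (sq_pd_pd_le_c2SqAt hF i j y)).trans (hM y)
  have hrow : ∀ i, ‖fderiv ℝ (fderiv ℝ F) y (EuclideanSpace.single i 1)‖ ≤ √n * M :=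
    fun i => opNorm_le_sqrt_card_mul _ hM0 (hentry i)
  calc _ ≤ √n * (√n * M) := opNorm_le_sqrt_card_mul _ (by positivity) hrow
    _ = n * M := by rw [← mul_assoc, Real.mul_self_sqrt (Nat.cast_nonneg n)]

theorem c2SqAt_le (hF : ContDiff ℝ 2 F) (y : Euc n) :
    c2SqAt F y ≤ F y ^ 2 + ‖fderiv ℝ F y‖ ^ 2 + n * ‖fderiv ℝ (fderiv ℝ F) y‖ ^ 2 := by
  set B := fderiv ℝ (fderiv ℝ F) y
  have hsecond : ∑ p ∈ Finset.univ.filter (fun p : Fin n × Fin n => p.1 ≤ p.2),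
      pd p.1 (pd p.2 F) y ^ 2 ≤ ∑ i, ‖B (EuclideanSpace.single i 1)‖ ^ 2 := by
    simp only [pd_pd_eq_fderiv_fderiv hF, ← sum_sq_apply_single_eq_norm_sq,
      ← Fintype.sum_prod_type']
    exact Finset.sum_le_sum_of_subset_of_nonneg (Finset.filter_subset _ _)
      fun _ _ _ => sq_nonneg _
  have hrows : ∑ i, ‖B (EuclideanSpace.single i 1)‖ ^ 2 ≤ n * ‖B‖ ^ 2 := by
    calc _ ≤ ∑ _i : Fin n, ‖B‖ ^ 2 := Finset.sum_le_sum fun i _ => by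
          gcongr
          simpa using B.le_opNorm (EuclideanSpace.single i 1)
      _ = n * ‖B‖ ^ 2 := by simp
  rw [c2SqAt, sum_sq_pd_eq_norm_sq_fderiv]
  linarith

end Coordinates

section NonnegGradient

variable {E : Type*} [NormedAddCommGroup E] [NormedSpace ℝ E] {F : E → ℝ} {K : ℝ}

theorem image_add_le_of_norm_fderiv_fderiv_le (hF : ContDiff ℝ 2 F)
    (hK : ∀ y, ‖fderiv ℝ (fderiv ℝ F) y‖ ≤ K) (x h : E) :
    F (x + h) ≤ F x + fderiv ℝ F x h + K * ‖h‖ ^ 2 := by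
  have hK0 : 0 ≤ K := (norm_nonneg (fderiv ℝ (fderiv ℝ F) x)).trans (hK x)
  have hDF : Differentiable ℝ (fderiv ℝ F) :=
    (hF.fderiv_right le_rfl).differentiable one_ne_zero
  have hlip : ∀ y, ‖fderiv ℝ F y - fderiv ℝ F x‖ ≤ K * ‖y - x‖ := fun y =>
    convex_univ.norm_image_sub_le_of_norm_fderiv_le (fun z _ => hDF z) (fun z _ => hK z)
      trivial trivial
  have hmvt := (convex_closedBall x ‖h‖).norm_image_sub_le_of_norm_hasFDerivWithin_le
    (f := fun y => F y - fderiv ℝ F x y) (y := x + h) (f' := fun y => fderiv ℝ F y - fderiv ℝ F x)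
    (fun y _ => (((hF.differentiable two_ne_zero) y).hasFDerivAt.sub
      (fderiv ℝ F x).hasFDerivAt).hasFDerivWithinAt)
    (fun y hy => (hlip y).trans (mul_le_mul_of_nonneg_left (mem_closedBall_iff_norm.1 hy) hK0))
    (Metric.mem_closedBall_self (norm_nonneg h)) (by simp)
  simp only [map_add, add_sub_cancel_left, Real.norm_eq_abs] at hmvt
  linarith [le_abs_self (F (x + h) - (fderiv ℝ F x x + fderiv ℝ F x h) - (F x - fderiv ℝ F x x))]

theorem norm_fderiv_le_sqrt_of_nonneg (hF : ContDiff ℝ 2 F)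
    (hK : ∀ y, ‖fderiv ℝ (fderiv ℝ F) y‖ ≤ K) (hpos : ∀ y, 0 ≤ F y) (x : E) :
    ‖fderiv ℝ F x‖ ≤ √(4 * K * F x) := by
  refine (fderiv ℝ F x).opNorm_le_bound (Real.sqrt_nonneg _) fun v => ?_
  have hdisc := discrim_le_zero (a := K * ‖v‖ ^ 2) (b := fderiv ℝ F x v) (c := F x) fun t => by
    have := image_add_le_of_norm_fderiv_fderiv_le hF hK x (t • v)
    rw [map_smul, smul_eq_mul, norm_smul, Real.norm_eq_abs, mul_pow, sq_abs] at this
    nlinarith [hpos (x + t • v)]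
  rw [discrim] at hdisc
  calc ‖fderiv ℝ F x v‖ ≤ √(4 * K * F x * ‖v‖ ^ 2) :=
        Real.abs_le_sqrt (by linarith)
    _ = √(4 * K * F x) * ‖v‖ := by
        rw [Real.sqrt_mul' _ (sq_nonneg _), Real.sqrt_sq (norm_nonneg v)]

end NonnegGradient

section SineBump

variable {E : Type*} [NormedAddCommGroup E] [NormedSpace ℝ E]

def sineBump (x : E) (p : ℝ) (L : E →L[ℝ] ℝ) (y : E) : ℝ := p * (1 + Real.sin (p⁻¹ * L (y - x)))

theorem contDiff_sineBump (x : E) (p : ℝ) (L : E →L[ℝ] ℝ) : ContDiff ℝ 2 (sineBump x p L) := by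
  unfold sineBump
  fun_prop

variable (x : E) (L : E →L[ℝ] ℝ) {p : ℝ}

theorem hasFDerivAt_inv_mul_apply_sub (y : E) :
    HasFDerivAt (fun y => p⁻¹ * L (y - x)) (p⁻¹ • L) y := by
  simpa using (L.hasFDerivAt.sub_const (L x)).const_mul p⁻¹

theorem sineBump_self : sineBump x p L x = p := by simp [sineBump]

theorem sineBump_nonneg (hp : 0 ≤ p) (y : E) : 0 ≤ sineBump x p L y :=
  mul_nonneg hp (by linarith [Real.neg_one_le_sin (p⁻¹ * L (y - x))])

theorem abs_sineBump_le (hp : 0 ≤ p) (y : E) : |sineBump x p L y| ≤ 2 * p := by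
  rw [abs_of_nonneg (sineBump_nonneg x L hp y), sineBump]
  nlinarith [Real.sin_le_one (p⁻¹ * L (y - x))]

theorem fderiv_sineBump (hp : p ≠ 0) :
    fderiv ℝ (sineBump x p L) = fun y => Real.cos (p⁻¹ * L (y - x)) • L := by
  funext y
  refine (((hasFDerivAt_inv_mul_apply_sub x L y).sin.const_add 1).const_mul p).fderiv.trans ?_
  rw [smul_smul, smul_smul, mul_right_comm, mul_inv_cancel₀ hp, one_mul]

theorem norm_fderiv_sineBump_le (hp : p ≠ 0) (y : E) :
    ‖fderiv ℝ (sineBump x p L) y‖ ≤ ‖L‖ := by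
  rw [fderiv_sineBump x L hp, norm_smul, Real.norm_eq_abs]
  exact mul_le_of_le_one_left (norm_nonneg L) (Real.abs_cos_le_one _)

theorem norm_fderiv_fderiv_sineBump_le (hp : 0 < p) (y : E) :
    ‖fderiv ℝ (fderiv ℝ (sineBump x p L)) y‖ ≤ p⁻¹ * ‖L‖ ^ 2 := by
  rw [fderiv_sineBump x L hp.ne', ((hasFDerivAt_inv_mul_apply_sub x L y).cos.smul_const L).fderiv,
    ContinuousLinearMap.norm_smulRight_apply, norm_smul, norm_smul, Real.norm_eq_abs,
    Real.norm_eq_abs, abs_neg, abs_inv, abs_of_pos hp]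
  calc _ = |Real.sin (p⁻¹ * L (y - x))| * (p⁻¹ * ‖L‖ ^ 2) := by ring
    _ ≤ p⁻¹ * ‖L‖ ^ 2 := mul_le_of_le_one_left (by positivity) (Real.abs_sin_le_one _)

end SineBump

section Jets

variable {n : ℕ} (x : Euc n)

theorem jet_self (F : Euc n → ℝ) : jet x F x = F x := by simp [jet]

theorem jet_eq_add_const (F : Euc n → ℝ) :
    jet x F = fun y => fderiv ℝ F x y + (F x - fderiv ℝ F x x) := by
  funext y
  simp only [jet, map_sub]
  ring

theorem isAffine_jet (F : Euc n → ℝ) : IsAffine (jet x F) :=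
  ⟨_, _, jet_eq_add_const x F⟩

theorem fderiv_jet (F : Euc n → ℝ) (y : Euc n) : fderiv ℝ (jet x F) y = fderiv ℝ F x := by
  simp [jet_eq_add_const]

theorem jet_sineBump {p : ℝ} (hp : p ≠ 0) (L : Euc n →L[ℝ] ℝ) :
    jet x (sineBump x p L) = fun y => p + L (y - x) := by
  funext y
  rw [jet, sineBump_self, fderiv_sineBump x L hp]
  simp

end Jets

theorem GammaPlusEmpty_subset_CPlus {n : ℕ} (hn : n ≤ 2) (x : Euc n) (M : ℝ) :
    GammaPlusEmpty x (8⁻¹ * M) ⊆ CPlus x M := by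
  rintro _ ⟨F, hF, hpos, hFM, rfl⟩
  have hM : 0 ≤ M := by linarith [(Real.sqrt_nonneg _).trans (hFM x)]
  have hD2 : ∀ y, ‖fderiv ℝ (fderiv ℝ F) y‖ ≤ M / 4 := fun y => by
    have hn' : (n : ℝ) ≤ 2 := by exact_mod_cast hn
    nlinarith [norm_fderiv_fderiv_le_of_c2NormLE hF hFM y]
  refine ⟨isAffine_jet x F, ?_, ?_, ?_⟩
  · rw [jet_self, sum_sq_pd_eq_norm_sq_fderiv, fderiv_jet]
    refine (Real.sqrt_le_sqrt (sq_add_norm_sq_fderiv_le_c2SqAt F x)).trans ((hFM x).trans ?_)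
    linarith
  · rw [jet_self]
    exact hpos x
  · rw [jet_self, fderiv_jet]
    refine (norm_fderiv_le_sqrt_of_nonneg hF hD2 hpos x).trans (Real.sqrt_le_sqrt ?_)
    nlinarith [hpos x]

theorem zero_mem_GammaPlusEmpty {n : ℕ} (x : Euc n) {M : ℝ} (hM : 0 ≤ M) :
    (fun _ => 0) ∈ GammaPlusEmpty x M := by
  refine ⟨fun _ => 0, contDiff_const, fun _ => le_rfl, fun y => ?_, ?_⟩
  · have h := c2SqAt_le (contDiff_const (c := (0 : ℝ))) y
    rw [Real.sqrt_eq_zero'.2 (by simpa [ContinuousLinearMap.opNorm_zero] using h)]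
    exact hM
  · funext y
    simp [jet]

theorem affine_mem_GammaPlusEmpty_of_pos {n : ℕ} (hn : n ≤ 2) (x : Euc n) (L : Euc n →L[ℝ] ℝ)
    {p M : ℝ} (hp : 0 < p) (hM : 0 ≤ M) (hpM : p ^ 2 + ‖L‖ ^ 2 ≤ M ^ 2)
    (hLp : ‖L‖ ^ 2 ≤ 4 * M * p) :
    (fun y => p + L (y - x)) ∈ GammaPlusEmpty x (8 * M) := by
  refine ⟨sineBump x p L, contDiff_sineBump x p L, sineBump_nonneg x L hp.le, fun y => ?_,
    jet_sineBump x hp.ne' L⟩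
  have hn' : (n : ℝ) ≤ 2 := by exact_mod_cast hn
  have h0 : sineBump x p L y ^ 2 ≤ 4 * p ^ 2 := by
    nlinarith [sq_abs (sineBump x p L y), abs_nonneg (sineBump x p L y),
      abs_sineBump_le x L hp.le y]
  have h1 := pow_le_pow_left₀ (norm_nonneg _) (norm_fderiv_sineBump_le x L hp.ne' y) 2
  have h2 : ‖fderiv ℝ (fderiv ℝ (sineBump x p L)) y‖ ^ 2 ≤ (4 * M) ^ 2 := by
    refine pow_le_pow_left₀ (norm_nonneg (fderiv ℝ (fderiv ℝ (sineBump x p L)) y)) ?_ 2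
    refine (norm_fderiv_fderiv_sineBump_le x L hp y).trans ?_
    rw [inv_mul_le_iff₀ hp]
    linarith
  refine (Real.sqrt_le_left (by positivity)).2 ?_
  nlinarith [c2SqAt_le (contDiff_sineBump x p L) y]

theorem CPlus_subset_GammaPlusEmpty {n : ℕ} (hn : n ≤ 2) (x : Euc n) (M : ℝ) :
    CPlus x M ⊆ GammaPlusEmpty x (8 * M) := by
  rintro _ ⟨⟨L, c, rfl⟩, hnorm, hp, hgrad⟩
  simp only [sum_sq_pd_eq_norm_sq_fderiv, fderiv_add_const, ContinuousLinearMap.fderiv]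
    at hnorm hgrad
  set p := L x + c
  replace hp : 0 ≤ p := hp
  have hM : 0 ≤ M := (Real.sqrt_nonneg _).trans hnorm
  have hpM : p ^ 2 + ‖L‖ ^ 2 ≤ M ^ 2 := (Real.sqrt_le_left hM).1 hnorm
  have hLp : ‖L‖ ^ 2 ≤ 4 * M * p := (Real.le_sqrt (norm_nonneg L) (by positivity)).1 hgrad
  have hP : (fun y => L y + c) = fun y => p + L (y - x) := by
    funext y
    simp only [p, map_sub]
    ring
  rcases hp.eq_or_lt with hp0 | hp0
  · have hL : L = 0 := by
      rw [← hp0] at hLp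
      exact norm_eq_zero.1 (by nlinarith [norm_nonneg L])
    have hc : c = 0 := by simpa [p, hL] using hp0.symm
    simpa [hL, hc] using zero_mem_GammaPlusEmpty x (by positivity : 0 ≤ 8 * M)
  · rw [hP]
    exact affine_mem_GammaPlusEmpty_of_pos hn x L hp0 hM hpM hLp

/-- **Lemma 4.6.** For `n ∈ {1, 2}` there is a constant `C`, depending only on `n`,
with `Γ₊(x, ∅, C⁻¹·M) ⊆ 𝒞₊(x, M) ⊆ Γ₊(x, ∅, C·M)` for all `x ∈ ℝⁿ` and `M ≥ 0`. -/
theorem CPlus_approximates_GammaPlusEmpty :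
    ∀ n : ℕ, n = 1 ∨ n = 2 →
      ∃ C : ℝ, 0 < C ∧
        ∀ (x : Euc n) (M : ℝ), 0 ≤ M →
          GammaPlusEmpty x (C⁻¹ * M) ⊆ CPlus x M ∧
          CPlus x M ⊆ GammaPlusEmpty x (C * M) := by
  intro n hn
  have hn2 : n ≤ 2 := by omega
  exact ⟨8, by norm_num, fun x M _ =>
    ⟨GammaPlusEmpty_subset_CPlus hn2 x M, CPlus_subset_GammaPlusEmpty hn2 x M⟩⟩
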